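/- There exist an integer m ≥ 3 and s ∈ (0,1) such that, setting t = 2m·log((1+s)/(1−s)) (the common hyperbolic perimeter), one has 2mπ/μ(s^m) < 2π/μ(tanh(t/4)); in particular m = 5 and s = 1/2 work, i.e., 10π/μ(1/32) < 2π/μ(tanh((5/2)·log 3)). Equivalently, the capacity of the nonconvex star E = ∪_{k=1}^m [0, s·e^{2πik/m}], which equals 2mπ/μ(s^m), is strictly smaller than the capacity 2π/μ(tanh(t/4)) of a segment [0, tanh(t/4)] having the same hyperbolic perimeter t. -/

import Mathlib

open Real MeasureTheory Set
noncomputable section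

/-- Complete elliptic integral of the first kind. -/
def ellK (r : ℝ) : ℝ := ∫ x in (0:ℝ)..1, 1 / Real.sqrt ((1 - x ^ 2) * (1 - r ^ 2 * x ^ 2))

/-- The Grötzsch modulus function μ. -/
def muFun (r : ℝ) : ℝ := (Real.pi / 2) * ellK (Real.sqrt (1 - r ^ 2)) / ellK r

/-!
Both capacities are compared through elementary two-sided bounds on `K`. Since
`1 - r²x² ≥ 1 - r²`, `K(r) ≤ (π/2)/√(1-r²)`. By AM–GM,
`√((1-x²)(1-r²x²)) ≤ 1 - c²x²` with `c² = (1+r²)/2`, and integrating `1/(1-c²x²)` gives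
`K(r) ≥ artanh(c)/c ≥ ½ log((5+3r²)/(1-r²))`. These turn into explicit bounds on `μ`.
For `m = 5`, `s = 1/2` the segment endpoint is `tanh((5/2) log 3) = 121/122`, and the bounds give
`5 μ(121/122) < 4.17 < 4.35 < μ(1/32)`.
-/

open intervalIntegral

def ellKIntegrand (r x : ℝ) : ℝ := 1 / √((1 - x ^ 2) * (1 - r ^ 2 * x ^ 2))

lemma intervalIntegrable_one_div_sqrt_one_sub_sq :
    IntervalIntegrable (fun x : ℝ => 1 / √(1 - x ^ 2)) volume 0 1 := by
  refine intervalIntegrable_deriv_of_nonneg continuous_arcsin.continuousOn (fun x hx => ?_)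
    fun x _ => by positivity
  simp only [zero_le_one, min_eq_left, max_eq_right, mem_Ioo] at hx
  exact hasDerivAt_arcsin (by linarith) hx.2.ne

lemma integral_one_div_sqrt_one_sub_sq : ∫ x in (0:ℝ)..1, 1 / √(1 - x ^ 2) = π / 2 := by
  rw [integral_eq_sub_of_hasDeriv_right_of_le zero_le_one continuous_arcsin.continuousOn
    (fun x hx => (hasDerivAt_arcsin (by linarith [hx.1]) hx.2.ne).hasDerivWithinAt)
    intervalIntegrable_one_div_sqrt_one_sub_sq]
  simp

lemma ellKIntegrand_le {r x : ℝ} (hr : r ^ 2 < 1) (hx : x ^ 2 ≤ 1) :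
    ellKIntegrand r x ≤ (√(1 - r ^ 2))⁻¹ * (1 / √(1 - x ^ 2)) := by
  rw [ellKIntegrand, sqrt_mul (by linarith), one_div, mul_inv, one_div, mul_comm]
  gcongr
  nlinarith [mul_nonneg (sq_nonneg r) (sub_nonneg.2 hx)]

lemma le_ellKIntegrand {r x : ℝ} (hr : r ^ 2 < 1) (hx : x ^ 2 < 1) :
    1 / (1 - (1 + r ^ 2) / 2 * x ^ 2) ≤ ellKIntegrand r x := by
  have hrx : r ^ 2 * x ^ 2 < 1 := by nlinarith
  apply one_div_le_one_div_of_le (sqrt_pos.2 (mul_pos (by linarith) (by linarith)))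
  rw [sqrt_le_left (by nlinarith)]
  nlinarith [sq_nonneg (x ^ 2 - r ^ 2 * x ^ 2)]

lemma intervalIntegrable_ellKIntegrand {r : ℝ} (hr : r ^ 2 < 1) :
    IntervalIntegrable (ellKIntegrand r) volume 0 1 := by
  refine (intervalIntegrable_one_div_sqrt_one_sub_sq.const_mul (√(1 - r ^ 2))⁻¹).mono_fun'
    (Measurable.aestronglyMeasurable (by unfold ellKIntegrand; fun_prop)) ?_
  rw [Filter.EventuallyLE, ae_restrict_iff' measurableSet_uIoc]
  refine .of_forall fun x hx => ?_
  rw [uIoc_of_le zero_le_one] at hx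
  rw [norm_of_nonneg (by unfold ellKIntegrand; positivity)]
  exact ellKIntegrand_le hr (by nlinarith [hx.1, hx.2])

lemma ellK_le {r : ℝ} (hr : r ^ 2 < 1) : ellK r ≤ π / 2 / √(1 - r ^ 2) :=
  calc ellK r ≤ ∫ x in (0:ℝ)..1, (√(1 - r ^ 2))⁻¹ * (1 / √(1 - x ^ 2)) :=
        integral_mono_on zero_le_one (intervalIntegrable_ellKIntegrand hr)
          (intervalIntegrable_one_div_sqrt_one_sub_sq.const_mul _)
          fun x hx => ellKIntegrand_le hr (by nlinarith [hx.1, hx.2])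
    _ = π / 2 / √(1 - r ^ 2) := by
        rw [intervalIntegral.integral_const_mul, integral_one_div_sqrt_one_sub_sq]
        ring

lemma intervalIntegrable_one_div_one_sub_mul_sq {c : ℝ} (hc : c ^ 2 < 1) :
    IntervalIntegrable (fun x : ℝ => 1 / (1 - c ^ 2 * x ^ 2)) volume 0 1 := by
  refine ContinuousOn.intervalIntegrable (continuousOn_const.div (by fun_prop) fun x hx => ?_)
  rw [uIcc_of_le zero_le_one] at hx
  nlinarith [mul_le_mul_of_nonneg_left (pow_le_one₀ (n := 2) hx.1 hx.2) (sq_nonneg c)]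

lemma hasDerivAt_log_one_add_sub_log_one_sub {c x : ℝ} (hc : c ≠ 0) (hx : (c * x) ^ 2 < 1) :
    HasDerivAt (fun x => (log (1 + c * x) - log (1 - c * x)) / (2 * c))
      (1 / (1 - c ^ 2 * x ^ 2)) x := by
  have hp : 0 < 1 + c * x := by nlinarith
  have hm : 0 < 1 - c * x := by nlinarith
  have h₁ : HasDerivAt (fun x => 1 + c * x) c x := by
    simpa using ((hasDerivAt_id x).const_mul c).const_add 1
  have h₂ : HasDerivAt (fun x => 1 - c * x) (-c) x := by
    simpa using ((hasDerivAt_id x).const_mul c).const_sub 1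
  have hden : 1 - c ^ 2 * x ^ 2 ≠ 0 := by nlinarith
  refine (((h₁.log hp.ne').sub (h₂.log hm.ne')).div_const (2 * c)).congr_deriv ?_
  field_simp
  ring

lemma integral_one_div_one_sub_mul_sq {c : ℝ} (hc₀ : c ≠ 0) (hc : c ^ 2 < 1) :
    ∫ x in (0:ℝ)..1, 1 / (1 - c ^ 2 * x ^ 2) = log ((1 + c) / (1 - c)) / (2 * c) := by
  rw [integral_eq_sub_of_hasDerivAt (fun x hx => hasDerivAt_log_one_add_sub_log_one_sub hc₀ ?_)
    (intervalIntegrable_one_div_one_sub_mul_sq hc)]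
  · rw [log_div (by nlinarith) (by nlinarith)]
    simp
  · rw [uIcc_of_le zero_le_one] at hx
    nlinarith [mul_le_mul_of_nonneg_left (pow_le_one₀ (n := 2) hx.1 hx.2) (sq_nonneg c)]

lemma log_div_two_le_ellK {r : ℝ} (hr : r ^ 2 < 1) :
    log ((5 + 3 * r ^ 2) / (1 - r ^ 2)) / 2 ≤ ellK r := by
  set c := √((1 + r ^ 2) / 2)
  have hc2 : c ^ 2 = (1 + r ^ 2) / 2 := sq_sqrt (by positivity)
  have hc0 : 0 < c := sqrt_pos.2 (by positivity)
  have hc1 : c < 1 := by nlinarith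
  have hlog : 0 ≤ log ((1 + c) / (1 - c)) :=
    log_nonneg ((one_le_div (by linarith)).2 (by linarith))
  calc log ((5 + 3 * r ^ 2) / (1 - r ^ 2)) / 2 ≤ log ((1 + c) / (1 - c)) / 2 := by
        gcongr ?_ / 2
        refine log_le_log (by apply div_pos <;> nlinarith) ?_
        rw [div_le_div_iff₀ (by linarith) (by linarith), show r ^ 2 = 2 * c ^ 2 - 1 by linarith]
        nlinarith [mul_nonneg (mul_nonneg hc0.le (sub_nonneg.2 hc1.le)) (sub_nonneg.2 hc1.le)]
    _ ≤ log ((1 + c) / (1 - c)) / (2 * c) := by gcongr; linarith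
    _ = ∫ x in (0:ℝ)..1, 1 / (1 - c ^ 2 * x ^ 2) :=
        (integral_one_div_one_sub_mul_sq hc0.ne' (by linarith)).symm
    _ ≤ ellK r := integral_mono_on_of_le_Ioo zero_le_one
        (intervalIntegrable_one_div_one_sub_mul_sq (by linarith))
        (intervalIntegrable_ellKIntegrand hr) fun x hx => by
          rw [hc2]; exact le_ellKIntegrand hr (by nlinarith [hx.1, hx.2])

lemma ellK_pos {r : ℝ} (hr : r ^ 2 < 1) : 0 < ellK r :=
  (div_pos (log_pos ((one_lt_div (by linarith)).2 (by nlinarith))) two_pos).trans_le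
    (log_div_two_le_ellK hr)

lemma muFun_pos {r : ℝ} (h₀ : 0 < r) (h₁ : r < 1) : 0 < muFun r := by
  have := ellK_pos (r := √(1 - r ^ 2)) (by rw [sq_sqrt (by nlinarith)]; nlinarith)
  have := ellK_pos (r := r) (by nlinarith)
  unfold muFun
  positivity

lemma le_muFun {r : ℝ} (h₀ : 0 < r) (h₁ : r < 1) :
    √(1 - r ^ 2) * log ((8 - 3 * r ^ 2) / r ^ 2) / 2 ≤ muFun r := by
  have hr2 : r ^ 2 < 1 := by nlinarith
  have hr' : √(1 - r ^ 2) ^ 2 = 1 - r ^ 2 := sq_sqrt (by linarith)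
  have hK' := log_div_two_le_ellK (r := √(1 - r ^ 2)) (by rw [hr']; nlinarith)
  rw [hr', sub_sub_cancel, show 5 + 3 * (1 - r ^ 2) = 8 - 3 * r ^ 2 by ring] at hK'
  have hs : 0 < √(1 - r ^ 2) := sqrt_pos.2 (by linarith)
  have hlog : 0 ≤ log ((8 - 3 * r ^ 2) / r ^ 2) :=
    log_nonneg ((one_le_div (by positivity)).2 (by linarith))
  rw [muFun, le_div_iff₀ (ellK_pos hr2)]
  calc √(1 - r ^ 2) * log ((8 - 3 * r ^ 2) / r ^ 2) / 2 * ellK r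
      ≤ √(1 - r ^ 2) * log ((8 - 3 * r ^ 2) / r ^ 2) / 2 * (π / 2 / √(1 - r ^ 2)) := by
        gcongr; exact ellK_le hr2
    _ = π / 2 * (log ((8 - 3 * r ^ 2) / r ^ 2) / 2) := by field_simp
    _ ≤ π / 2 * ellK √(1 - r ^ 2) := by gcongr

lemma muFun_le {r : ℝ} (h₀ : 0 < r) (h₁ : r < 1) :
    muFun r ≤ π ^ 2 / (2 * r * log ((5 + 3 * r ^ 2) / (1 - r ^ 2))) := by
  have hr2 : r ^ 2 < 1 := by nlinarith
  have hr' : √(1 - r ^ 2) ^ 2 = 1 - r ^ 2 := sq_sqrt (by linarith)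
  have hK' := ellK_le (r := √(1 - r ^ 2)) (by rw [hr']; nlinarith)
  rw [hr', sub_sub_cancel, sqrt_sq h₀.le] at hK'
  have hlog : 0 < log ((5 + 3 * r ^ 2) / (1 - r ^ 2)) :=
    log_pos ((one_lt_div (by linarith)).2 (by nlinarith))
  calc muFun r ≤ π / 2 * (π / 2 / r) / (log ((5 + 3 * r ^ 2) / (1 - r ^ 2)) / 2) := by
        unfold muFun
        gcongr
        exact log_div_two_le_ellK hr2
    _ = π ^ 2 / (2 * r * log ((5 + 3 * r ^ 2) / (1 - r ^ 2))) := by field_simp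

lemma tanh_log_div_two {y : ℝ} (hy : 0 < y) : tanh (log y / 2) = (y - 1) / (y + 1) := by
  have hmem : (y - 1) / (y + 1) ∈ Ioo (-1) 1 :=
    ⟨by rw [lt_div_iff₀ (by linarith)]; linarith, by rw [div_lt_one (by linarith)]; linarith⟩
  have h : log y / 2 = artanh ((y - 1) / (y + 1)) := by
    rw [artanh_eq_half_log (Ioo_subset_Icc_self hmem)]
    field_simp
    ring_nf
  rw [h, tanh_artanh hmem]

lemma five_mul_muFun_lt : 5 * muFun (121 / 122) < muFun (1 / 32) := by
  have hlog₁ : 6 < log (118343 / 243) := by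
    rw [lt_log_iff_exp_lt (by norm_num), show (6 : ℝ) = (6 : ℕ) by norm_num, ← exp_one_pow]
    calc exp 1 ^ 6 < 2.7182818286 ^ 6 := by gcongr; exact exp_one_lt_d9
      _ < 118343 / 243 := by norm_num
  have hlog₂ : 9 < log 8189 := by
    rw [lt_log_iff_exp_lt (by norm_num), show (9 : ℝ) = (9 : ℕ) by norm_num, ← exp_one_pow]
    calc exp 1 ^ 9 < 2.7182818286 ^ 9 := by gcongr; exact exp_one_lt_d9
      _ < 8189 := by norm_num
  have hsqrt : 31 / 32 ≤ √(1 - (1 / 32 : ℝ) ^ 2) := le_sqrt_of_sq_le (by norm_num)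
  calc 5 * muFun (121 / 122) ≤ 5 * (π ^ 2 / (2 * (121 / 122) * log (118343 / 243))) := by
        have h := muFun_le (r := 121 / 122) (by norm_num) (by norm_num)
        rw [show (5 + 3 * (121 / 122 : ℝ) ^ 2) / (1 - (121 / 122) ^ 2) = 118343 / 243 by norm_num] at h
        gcongr
    _ < 31 / 32 * 9 / 2 := by
        rw [mul_div_assoc', div_lt_iff₀ (by positivity)]
        nlinarith [pi_pos, pi_lt_d2]
    _ ≤ √(1 - (1 / 32 : ℝ) ^ 2) * log ((8 - 3 * (1 / 32) ^ 2) / (1 / 32) ^ 2) / 2 := by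
        rw [show (8 - 3 * (1 / 32) ^ 2) / (1 / 32 : ℝ) ^ 2 = 8189 by norm_num]
        gcongr
    _ ≤ muFun (1 / 32) := le_muFun (by norm_num) (by norm_num)

/-- There are an integer `m ≥ 3` and `s ∈ (0,1)` for which, with
`t = 2m log((1+s)/(1−s))` the common hyperbolic perimeter, the capacity `2mπ/μ(sᵐ)` of the
nonconvex star `E = ⋃_{k=1}^m [0, s e^{2πik/m}]` is strictly smaller than the capacity
`2π/μ(tanh(t/4))` of a segment of the same hyperbolic perimeter; in particular `m = 5`,
`s = 1/2` work, i.e. `10π/μ(1/32) < 2π/μ(tanh((5/2) log 3))`. -/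
theorem star_capacity_lt_segment_capacity :
    (∃ m : ℕ, 3 ≤ m ∧ ∃ s : ℝ, s ∈ Set.Ioo (0:ℝ) 1 ∧
      2 * m * Real.pi / muFun (s ^ m)
        < 2 * Real.pi / muFun (Real.tanh (2 * m * Real.log ((1 + s) / (1 - s)) / 4))) ∧
    10 * Real.pi / muFun (1 / 32)
      < 2 * Real.pi / muFun (Real.tanh ((5 / 2) * Real.log 3)) := by
  have hhalf_log : (5 / 2) * log 3 = log 243 / 2 := by
    rw [show (243 : ℝ) = 3 ^ 5 by norm_num, log_pow]
    push_cast
    ring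
  have hsegment : tanh ((5 / 2) * log 3) = 121 / 122 := by
    rw [hhalf_log, tanh_log_div_two (by norm_num)]
    norm_num
  have hcapacity : 10 * π / muFun (1 / 32) < 2 * π / muFun (tanh ((5 / 2) * log 3)) := by
    rw [hsegment, div_lt_div_iff₀ (muFun_pos (by norm_num) (by norm_num))
      (muFun_pos (by norm_num) (by norm_num))]
    nlinarith [five_mul_muFun_lt, pi_pos]
  refine ⟨⟨5, by norm_num, 1 / 2, ⟨by norm_num, by norm_num⟩, ?_⟩, hcapacity⟩
  have hperimeter : 2 * ((5 : ℕ) : ℝ) * log ((1 + 1 / 2) / (1 - 1 / 2)) / 4 = (5 / 2) * log 3 := by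
    norm_num
    ring
  rw [hperimeter]
  convert hcapacity using 2 <;> norm_num
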